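/- Let n ≥ 2, let κ, b, κ_3, …, κ_n be real numbers with b ≠ 0, and let S be the linear endomorphism of an n-dimensional real vector space defined on a basis (E_1, …, E_n) by S E_1 = κ E_1 + b E_2, S E_2 = −b E_1 + κ E_2, and S E_i = κ_i E_i for i ≥ 3. Set κ_1 = κ_2 = κ. Then the coefficients of the characteristic polynomial det(t·I − S) = Σ_{k=0}^n a_k t^{n−k} are given by a_1 = −Σ_{i=1}^n κ_i and, for every k = 2, …, n, a_k = (−1)^k (μ_k + b² μ_{k−2}^{\{1,2\}}), where μ_k is the k-th elementary symmetric function of κ_1, …, κ_n. -/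

import Mathlib

/-!
In the basis `E` the matrix of `S` is block diagonal, with the rotation-scaling block
`!![κ, -b; b, κ]` followed by `diag(κ_3, …, κ_n)`. Hence
`Q_S = ((t - κ)² + b²) ∏_{i ≥ 3} (t - κ_i) = ∏_i (t - κ_i) + b² ∏_{i ≥ 3} (t - κ_i)`,
and Vieta's formulas for the two products give `μ_k` and `μ_{k-2}^{1,2}`.
-/

/-- `mu κ J k` is the `k`-th elementary symmetric function of the values `κ i`
with indices `i` outside `J`, with the conventions `mu κ J 0 = 1` and
`mu κ J k = 0` for `k < 0`. -/
noncomputable def mu {n : ℕ} (κ : Fin n → ℝ) (J : Finset (Fin n)) (k : ℤ) : ℝ :=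
  if k < 0 then 0
  else ∑ T ∈ (Finset.univ \ J).powersetCard k.toNat, ∏ i ∈ T, κ i

open Polynomial Matrix Finset

theorem mu_of_neg {n : ℕ} (κ : Fin n → ℝ) (J : Finset (Fin n)) {k : ℤ} (hk : k < 0) :
    mu κ J k = 0 :=
  if_pos hk

theorem mu_natCast {n : ℕ} (κ : Fin n → ℝ) (J : Finset (Fin n)) (k : ℕ) :
    mu κ J k = ∑ T ∈ (univ \ J).powersetCard k, ∏ i ∈ T, κ i := by
  simp [mu]

theorem mu_empty_one {n : ℕ} (κ : Fin n → ℝ) : mu κ ∅ 1 = ∑ i, κ i := by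
  simpa [powersetCard_one] using mu_natCast κ ∅ 1

-- For `k < #J` both sides vanish: the product has degree `n - #J` and `mu` is `0` below `0`.
theorem coeff_prod_sdiff_X_sub_C {n : ℕ} (κ : Fin n → ℝ) (J : Finset (Fin n)) {k : ℕ}
    (hk : k ≤ n) :
    (∏ i ∈ univ \ J, (X - C (κ i))).coeff (n - k) = (-1) ^ (k + #J) * mu κ J (k - #J) := by
  have hJ : #J ≤ n := by simpa using J.card_le_univ
  have hcard : #(univ \ J) = n - #J := by
    rw [card_sdiff_of_subset (subset_univ J), card_univ, Fintype.card_fin]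
  have hprod : ∏ i ∈ univ \ J, (X - C (κ i)) = (((univ \ J).val.map κ).map (X - C ·)).prod := by
    rw [prod_eq_multiset_prod, Multiset.map_map]
    rfl
  rcases lt_or_ge k #J with hlt | hle
  · rw [mu_of_neg κ J (k := k - #J) (by omega), mul_zero]
    refine coeff_eq_zero_of_natDegree_lt ((natDegree_prod_le _ _).trans_lt ?_)
    simp only [natDegree_X_sub_C, sum_const, smul_eq_mul, mul_one, hcard]
    omega
  · obtain ⟨m, rfl⟩ := Nat.exists_eq_add_of_le hle
    have hdeg : n - (#J + m) = Multiset.card ((univ \ J).val.map κ) - m := by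
      rw [Multiset.card_map, card_val, hcard]
      omega
    have hsign : (-1 : ℝ) ^ (#J + m + #J) = (-1) ^ m := by
      rw [show #J + m + #J = m + 2 * #J by ring, pow_add, pow_mul]
      simp
    rw [hprod, hdeg, Multiset.prod_X_sub_C_coeff _ (Nat.sub_le _ _),
      Nat.sub_sub_self (by rw [Multiset.card_map, card_val, hcard]; omega), hsign,
      show ((#J + m : ℕ) : ℤ) - #J = m by push_cast; ring, mu_natCast, esymm_map_val]

theorem Matrix.charpoly_rotation {R : Type*} [CommRing R] (c b : R) :
    Matrix.charpoly !![c, -b; b, c] = (X - C c) ^ 2 + C (b ^ 2) := by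
  rw [Matrix.charpoly, det_fin_two]
  simp
  ring

section RotationDiagonal

variable {R M ι : Type*} [CommRing R] [AddCommGroup M] [Module R M] [Fintype ι] [DecidableEq ι]
  (E : Module.Basis (Fin 2 ⊕ ι) R M) (S : M →ₗ[R] M) (c b : R) (d : ι → R)

theorem LinearMap.toMatrix_eq_fromBlocks_of_rotation_diagonal
    (h0 : S (E (.inl 0)) = c • E (.inl 0) + b • E (.inl 1))
    (h1 : S (E (.inl 1)) = -b • E (.inl 0) + c • E (.inl 1))
    (hd : ∀ k, S (E (.inr k)) = d k • E (.inr k)) :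
    LinearMap.toMatrix E E S = fromBlocks !![c, -b; b, c] 0 0 (diagonal d) := by
  ext (i | i) (j | j)
  · fin_cases i <;> fin_cases j <;> simp [LinearMap.toMatrix_apply, h0, h1]
  · simp [LinearMap.toMatrix_apply, hd]
  · fin_cases j <;> simp [LinearMap.toMatrix_apply, h0, h1]
  · by_cases h : i = j <;> simp [LinearMap.toMatrix_apply, hd, h]

theorem LinearMap.charpoly_eq_of_rotation_diagonal [Module.Free R M] [Module.Finite R M]
    (h0 : S (E (.inl 0)) = c • E (.inl 0) + b • E (.inl 1))
    (h1 : S (E (.inl 1)) = -b • E (.inl 0) + c • E (.inl 1))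
    (hd : ∀ k, S (E (.inr k)) = d k • E (.inr k)) :
    S.charpoly = ((X - C c) ^ 2 + C (b ^ 2)) * ∏ k, (X - C (d k)) := by
  rw [← LinearMap.charpoly_toMatrix S E,
    LinearMap.toMatrix_eq_fromBlocks_of_rotation_diagonal E S c b d h0 h1 hd,
    charpoly_fromBlocks_zero₂₁, Matrix.charpoly_rotation, charpoly_diagonal]

end RotationDiagonal

theorem LinearMap.charpoly_type_II {V : Type*} [AddCommGroup V] [Module ℝ V]
    [FiniteDimensional ℝ V] {n : ℕ} (hn : 2 ≤ n) (κ : Fin n → ℝ) (b : ℝ)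
    (hκ : κ ⟨0, Nat.zero_lt_of_lt hn⟩ = κ ⟨1, hn⟩) (E : Module.Basis (Fin n) ℝ V)
    (S : V →ₗ[ℝ] V)
    (hS0 : S (E ⟨0, Nat.zero_lt_of_lt hn⟩) =
      κ ⟨0, Nat.zero_lt_of_lt hn⟩ • E ⟨0, Nat.zero_lt_of_lt hn⟩ + b • E ⟨1, hn⟩)
    (hS1 : S (E ⟨1, hn⟩) =
      -b • E ⟨0, Nat.zero_lt_of_lt hn⟩ + κ ⟨0, Nat.zero_lt_of_lt hn⟩ • E ⟨1, hn⟩)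
    (hSi : ∀ i : Fin n, 2 ≤ (i : ℕ) → S (E i) = κ i • E i) :
    S.charpoly = ∏ i, (X - C (κ i)) +
      C (b ^ 2) * ∏ i ∈ univ \ {⟨0, Nat.zero_lt_of_lt hn⟩, ⟨1, hn⟩}, (X - C (κ i)) := by
  set J : Finset (Fin n) := {⟨0, Nat.zero_lt_of_lt hn⟩, ⟨1, hn⟩}
  let e : Fin 2 ⊕ {i : Fin n // ¬(i : ℕ) < 2} ≃ Fin n :=
    (Equiv.sumCongr (Fin.castLEquiv hn) (Equiv.refl _)).trans (Equiv.sumCompl _)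
  have hE : ∀ x, E.reindex e.symm x = E (e x) := by simp
  have hrest : ∏ i : {i : Fin n // ¬(i : ℕ) < 2}, (X - C (κ i)) =
      ∏ i ∈ univ \ J, (X - C (κ i)) :=
    (prod_subtype (univ \ J) (fun i => by simp [J, Fin.ext_iff]; omega)
      (fun i => X - C (κ i))).symm
  have hall : ∏ i, (X - C (κ i)) =
      (X - C (κ ⟨0, Nat.zero_lt_of_lt hn⟩)) ^ 2 * ∏ i ∈ univ \ J, (X - C (κ i)) := by
    rw [← prod_sdiff (subset_univ J), prod_pair (by simp [Fin.ext_iff]), ← hκ]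
    ring
  rw [LinearMap.charpoly_eq_of_rotation_diagonal (E.reindex e.symm) S _ b (κ ·)
    (by simp only [hE]; exact hS0) (by simp only [hE]; exact hS1)
    (fun i => by simp only [hE]; exact hSi i (not_lt.mp i.2)), hrest, hall]
  ring

/-- Coefficients of the characteristic polynomial of a shape operator of type II:
`S E_1 = κ E_1 + b E_2`, `S E_2 = −b E_1 + κ E_2`, `S E_i = κ_i E_i` for `i ≥ 3`
(indices `0`, `1` and `i ≥ 2` in the `Fin n` indexing, with `κ_1 = κ_2 = κ`).
Then `a_1 = −Σ κ_i` and `a_k = (−1)^k (μ_k + b² μ_{k−2}^{{1,2}})` for `2 ≤ k ≤ n`. -/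
theorem charpoly_coeff_type_II
    (V : Type*) [AddCommGroup V] [Module ℝ V] [FiniteDimensional ℝ V]
    (n : ℕ) (hn : 2 ≤ n)
    (κ : Fin n → ℝ) (b : ℝ)
    (hκ : κ ⟨0, by omega⟩ = κ ⟨1, by omega⟩)
    (E : Module.Basis (Fin n) ℝ V)
    (S : V →ₗ[ℝ] V)
    (hS0 : S (E ⟨0, by omega⟩) = κ ⟨0, by omega⟩ • E ⟨0, by omega⟩ + b • E ⟨1, by omega⟩)
    (hS1 : S (E ⟨1, by omega⟩) = -b • E ⟨0, by omega⟩ + κ ⟨0, by omega⟩ • E ⟨1, by omega⟩)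
    (hSi : ∀ i : Fin n, 2 ≤ (i : ℕ) → S (E i) = κ i • E i)
    (a : ℕ → ℝ) (ha : ∀ k, a k = (LinearMap.charpoly S).coeff (n - k)) :
    a 1 = -∑ i, κ i ∧
    ∀ k, 2 ≤ k → k ≤ n →
      a k = (-1 : ℝ) ^ k *
        (mu κ ∅ (k : ℤ) + b ^ 2 * mu κ {⟨0, by omega⟩, ⟨1, by omega⟩} ((k : ℤ) - 2)) := by
  have hJ : #({⟨0, by omega⟩, ⟨1, by omega⟩} : Finset (Fin n)) = 2 :=
    card_pair (by simp [Fin.ext_iff])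
  have hcoeff : ∀ k ≤ n, a k = (-1 : ℝ) ^ k *
      (mu κ ∅ k + b ^ 2 * mu κ {⟨0, by omega⟩, ⟨1, by omega⟩} (k - 2)) := by
    intro k hk
    have hfull := coeff_prod_sdiff_X_sub_C κ ∅ hk
    rw [sdiff_empty, card_empty, add_zero, Nat.cast_zero, sub_zero] at hfull
    rw [ha, LinearMap.charpoly_type_II hn κ b hκ E S hS0 hS1 hSi, coeff_add, coeff_C_mul, hfull,
      coeff_prod_sdiff_X_sub_C κ _ hk, hJ, pow_add, Nat.cast_ofNat]
    ring
  refine ⟨?_, fun k _ hk => hcoeff k hk⟩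
  rw [hcoeff 1 (by omega), Nat.cast_one, mu_empty_one, mu_of_neg κ _ (by norm_num)]
  ring
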